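/- arXiv:1112.1397 — 2 statements merged into one kernel-verified Lean document; each statement's English description precedes it below -/
import Mathlib

section
/- A function a : ℕ → ℝ that is a finite sum of multiplicative functions, a(n) = ∑_{ℓ=1}^{k} c_ℓ b_ℓ(n), satisfies: for any n coprime to m, a(nm) = ∑_ℓ c_ℓ b_ℓ(n) b_ℓ(m). In particular, if n₁,...,n_{k+1} are pairwise coprime integers and m₁,...,m_{k+1} are integers with gcd(n_i, m_j)=1 for all i,j, then the (k+1)×(k+1) matrix M with M[i][j] = a(n_i m_j) - a(n_i) has rank at most k. -/
/-- A finite sum of multiplicative functions `a N = ∑ ℓ, c ℓ * b ℓ N` satisfies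
`a (n * m) = ∑ ℓ, c ℓ * b ℓ n * b ℓ m` for coprime `n, m`, and the matrix
`M i j = a (n i * m j) - a (n i)` built from `k + 1` pairwise coprime test points
has rank at most `k`. -/
theorem sum_of_multiplicative_rank_le (k : ℕ) (b : Fin k → ℕ → ℝ)
    (hb1 : ∀ ℓ, b ℓ 1 = 1)
    (hbmul : ∀ ℓ x y, Nat.Coprime x y → b ℓ (x * y) = b ℓ x * b ℓ y)
    (c : Fin k → ℝ) (a : ℕ → ℝ) (ha : ∀ N, a N = ∑ ℓ, c ℓ * b ℓ N) :
    (∀ n m' : ℕ, Nat.Coprime n m' → a (n * m') = ∑ ℓ, c ℓ * b ℓ n * b ℓ m') ∧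
    (∀ n m : Fin (k + 1) → ℕ,
      (∀ i j, i ≠ j → Nat.Coprime (n i) (n j)) →
      (∀ i j, Nat.gcd (n i) (m j) = 1) →
      (Matrix.of fun i j : Fin (k + 1) => a (n i * m j) - a (n i)).rank ≤ k) := by
  have key : ∀ n m' : ℕ, Nat.Coprime n m' → a (n * m') = ∑ ℓ, c ℓ * b ℓ n * b ℓ m' := by
    intro n m' h
    rw [ha]
    exact Finset.sum_congr rfl fun ℓ _ => by rw [hbmul ℓ n m' h, mul_assoc]
  refine ⟨key, fun n m hn hnm => ?_⟩
  have hM : (Matrix.of fun i j : Fin (k + 1) => a (n i * m j) - a (n i)) =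
      (Matrix.of fun (i : Fin (k+1)) (ℓ : Fin k) => c ℓ * b ℓ (n i)) *
      (Matrix.of fun (ℓ : Fin k) (j : Fin (k+1)) => b ℓ (m j) - 1) := by
    ext i j
    simp only [Matrix.mul_apply, Matrix.of_apply]
    rw [key (n i) (m j) (hnm i j), ha (n i)]
    rw [← Finset.sum_sub_distrib]
    exact Finset.sum_congr rfl fun ℓ _ => by ring
  rw [hM]
  exact (Matrix.rank_mul_le_left _ _).trans
    ((Matrix.rank_le_card_width _).trans (by simp))
end

section
/- Suppose f : ℕ → ℝ satisfies f(n) = ∑_{i=1}^{k} c_i b_i(n) for multiplicative functions b_i and reals c_i, and suppose there exist pairwise coprime integers n₁, ..., n_{k+1} > 1 and primes p₁, ..., p_{k+1} not dividing any n_j, such that f(n_i) = 0 for all i, f(n_i p_j²) = 0 for i ≠ j, and f(n_i p_i²) ≠ 0 for all i. Then we get a contradiction; no such representation exists. -/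
/-- The full contradiction scheme: a `k`-term sum of multiplicative functions cannot
vanish at `k + 1` pairwise coprime test points `n i > 1` and at all `n i * p j ^ 2`
for `i ≠ j` (with `p j` primes dividing no `n i`) while being nonzero at each
`n i * p i ^ 2`. -/
theorem no_euler_product_representation (f : ℕ → ℝ) (k : ℕ)
    (c : Fin k → ℝ) (b : Fin k → ℕ → ℝ)
    (hb1 : ∀ ℓ, b ℓ 1 = 1)
    (hbmul : ∀ ℓ x y, Nat.Coprime x y → b ℓ (x * y) = b ℓ x * b ℓ y)
    (hrep : ∀ N, f N = ∑ ℓ, c ℓ * b ℓ N)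
    (n p : Fin (k + 1) → ℕ)
    (hn : ∀ i, 1 < n i)
    (hncop : ∀ i j, i ≠ j → Nat.Coprime (n i) (n j))
    (hp : ∀ i, (p i).Prime)
    (hpn : ∀ i j, ¬ p i ∣ n j)
    (h0 : ∀ i, f (n i) = 0)
    (hoff : ∀ i j, i ≠ j → f (n i * p j ^ 2) = 0)
    (hdiag : ∀ i, f (n i * p i ^ 2) ≠ 0) :
    False := by
  -- coprimality of n i with p j ^ 2
  have hcop : ∀ i j : Fin (k + 1), Nat.Coprime (n i) (p j ^ 2) := fun i j =>
    (((hp j).coprime_iff_not_dvd.mpr (hpn j i)).symm).pow_right 2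
  -- the k+1 vectors v i = (b ℓ (n i))_ℓ in ℝ^k are linearly dependent
  set v : Fin (k + 1) → (Fin k → ℝ) := fun i ℓ => b ℓ (n i) with hv
  have hdep : ¬ LinearIndependent ℝ v := by
    intro hli
    have := hli.fintype_card_le_finrank
    simp [Module.finrank_fintype_fun_eq_card] at this
  rw [Fintype.not_linearIndependent_iff] at hdep
  obtain ⟨g, hg, i0, hi0⟩ := hdep
  -- evaluate ∑ i g i * f (n i * p i0 ^ 2) two ways
  have key : ∑ i, g i * f (n i * p i0 ^ 2) = 0 := by
    have hf : ∀ i, f (n i * p i0 ^ 2) =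
        ∑ ℓ, c ℓ * b ℓ (p i0 ^ 2) * b ℓ (n i) := by
      intro i
      rw [hrep]
      refine Finset.sum_congr rfl fun ℓ _ => ?_
      rw [hbmul ℓ _ _ (hcop i i0)]; ring
    calc ∑ i, g i * f (n i * p i0 ^ 2)
        = ∑ i, ∑ ℓ, c ℓ * b ℓ (p i0 ^ 2) * (g i * b ℓ (n i)) := by
          refine Finset.sum_congr rfl fun i _ => ?_
          rw [hf i, Finset.mul_sum]
          exact Finset.sum_congr rfl fun ℓ _ => by ring
      _ = ∑ ℓ, c ℓ * b ℓ (p i0 ^ 2) * (∑ i, g i * b ℓ (n i)) := by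
          rw [Finset.sum_comm]
          exact Finset.sum_congr rfl fun ℓ _ => (Finset.mul_sum _ _ _).symm
      _ = 0 := by
          refine Finset.sum_eq_zero fun ℓ _ => ?_
          have := congrFun hg ℓ
          simp only [Finset.sum_apply, Pi.smul_apply, smul_eq_mul, Pi.zero_apply, hv] at this
          rw [this, mul_zero]
  have hsum : ∑ i, g i * f (n i * p i0 ^ 2) = g i0 * f (n i0 * p i0 ^ 2) := by
    rw [Finset.sum_eq_single i0]
    · intro i _ hi
      rw [hoff i i0 hi, mul_zero]
    · intro h; exact absurd (Finset.mem_univ i0) h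
  rw [hsum] at key
  exact hi0 (by
    rcases mul_eq_zero.mp key with h | h
    · exact h
    · exact absurd h (hdiag i0))
end
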